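/- Let λ > 1, R > 0, γ > 0 be real numbers and let p be a polynomial with real coefficients. For every ε' > 0 there exists a constant K' > 0 such that for all natural numbers t and d with d ≤ t, and for every sequence e : ℕ → ℝ with |e_k| ≤ 2 for all k, the weighted sum satisfies γ · λ^t · | Σ_{k=⌈R(t-d)⌉}^{⌊Rt⌋} λ^{-k/R} · p(⌊Rt⌋ - k) · e_k | ≤ K' · λ^{(1+ε')·d}. -/

import Mathlib

open Filter Finset Polynomial Asymptotics

/-! Every erroneous index `k ≥ R(t-d)` has weight `λ^t λ^{-k/R} ≤ λ^d`, the polynomial is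
evaluated at `0 ≤ ⌊Rt⌋ - k ≤ Rd`, and there are at most `Rd + 1` such indices. The sum is
therefore at most `λ^d` times a polynomial in `d`, and a polynomial is `O((λ^{ε'})^d)`. -/

theorem Polynomial.exists_abs_eval_le (p : ℝ[X]) :
    ∃ C > 0, ∀ x y : ℝ, |x| ≤ y → |p.eval x| ≤ C * (1 + y) ^ p.natDegree := by
  refine ⟨∑ i ∈ range (p.natDegree + 1), |p.coeff i| + 1, by positivity, fun x y hxy => ?_⟩
  have hy : 1 ≤ 1 + y := by linarith [abs_nonneg x]
  calc |p.eval x| ≤ ∑ i ∈ range (p.natDegree + 1), |p.coeff i| * |x| ^ i := by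
        rw [eval_eq_sum_range]
        exact (abs_sum_le_sum_abs _ _).trans_eq (sum_congr rfl fun i _ => by rw [abs_mul, abs_pow])
    _ ≤ ∑ i ∈ range (p.natDegree + 1), |p.coeff i| * (1 + y) ^ p.natDegree := by
        refine sum_le_sum fun i hi => ?_
        have hi : i ≤ p.natDegree := Nat.lt_succ_iff.mp (mem_range.mp hi)
        gcongr
        calc |x| ^ i ≤ (1 + y) ^ i := by gcongr; linarith
          _ ≤ (1 + y) ^ p.natDegree := pow_le_pow_right₀ hy hi
    _ ≤ (∑ i ∈ range (p.natDegree + 1), |p.coeff i| + 1) * (1 + y) ^ p.natDegree := by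
        rw [← sum_mul]; gcongr; linarith

theorem Polynomial.exists_abs_eval_natCast_le_mul_pow (q : ℝ[X]) {r : ℝ} (hr : 1 < r) :
    ∃ K > 0, ∀ n : ℕ, |q.eval (n : ℝ)| ≤ K * r ^ n := by
  have hdeg : q.degree ≤ (X ^ q.natDegree : ℝ[X]).degree := by
    rw [degree_X_pow]
    exact degree_le_natDegree
  have hO : (fun n : ℕ => q.eval (n : ℝ)) =O[atTop] fun n => r ^ n :=
    ((isBigO_atTop_of_degree_le q _ hdeg).comp_tendsto tendsto_natCast_atTop_atTop).trans
      (by simpa [Function.comp_def] using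
        (isLittleO_pow_const_const_pow_of_one_lt (R := ℝ) q.natDegree hr).isBigO)
  obtain ⟨K, hK, hbound⟩ := bound_of_isBigO_nat_atTop hO
  have hr0 : 0 < r := by linarith
  refine ⟨K, hK, fun n => ?_⟩
  simpa [abs_of_pos hr0] using hbound (pow_ne_zero n hr0.ne')

theorem Int.card_Icc_ceil_floor_le {x y : ℝ} (h : x ≤ y) :
    (#(Icc ⌈x⌉ ⌊y⌋) : ℝ) ≤ y - x + 1 := by
  rcases le_or_gt ⌈x⌉ (⌊y⌋ + 1) with hle | hlt
  · have hcard : (#(Icc ⌈x⌉ ⌊y⌋) : ℝ) = ⌊y⌋ + 1 - ⌈x⌉ := by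
      exact_mod_cast Int.card_Icc_of_le _ _ hle
    rw [hcard]
    linarith [Int.floor_le y, Int.le_ceil x]
  · rw [Int.card_Icc, Int.toNat_of_nonpos (by omega)]
    push_cast
    linarith

theorem Real.rpow_mul_rpow_neg_div_le {lam R t d k : ℝ} (hlam : 1 ≤ lam) (hR : 0 < R)
    (hk : R * (t - d) ≤ k) : lam ^ t * lam ^ (-k / R) ≤ lam ^ d := by
  rw [← Real.rpow_add (by linarith)]
  refine Real.rpow_le_rpow_of_exponent_le hlam ?_
  have : t - d ≤ k / R := by rw [le_div_iff₀ hR]; linarith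
  rw [neg_div]
  linarith

theorem abs_error_term_le {lam R t d : ℝ} (hlam : 1 ≤ lam) (hR : 0 < R) {p : ℝ[X]} {M : ℝ}
    (hp : ∀ x y : ℝ, |x| ≤ y → |p.eval x| ≤ M * (1 + y) ^ p.natDegree) {k : ℤ}
    (hk : k ∈ Icc ⌈R * (t - d)⌉ ⌊R * t⌋) {e : ℝ} (he : |e| ≤ 2) :
    |lam ^ t * (lam ^ (-(k : ℝ) / R) * p.eval ((⌊R * t⌋ : ℝ) - k) * e)|
      ≤ lam ^ d * (M * (1 + R * d) ^ p.natDegree) * 2 := by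
  obtain ⟨hak, hkb⟩ := mem_Icc.mp hk
  have hlam0 : 0 < lam := by linarith
  have hpk : |p.eval ((⌊R * t⌋ : ℝ) - k)| ≤ M * (1 + R * d) ^ p.natDegree := by
    refine hp _ _ (abs_le.mpr ⟨?_, ?_⟩)
    · linarith [(Int.cast_le (R := ℝ)).mpr hkb, Int.floor_le (R * t), Int.ceil_le.mp hak]
    · linarith [Int.floor_le (R * t), Int.ceil_le.mp hak]
  calc _ = lam ^ t * lam ^ (-(k : ℝ) / R) * |p.eval ((⌊R * t⌋ : ℝ) - k)| * |e| := by
        rw [abs_mul, abs_mul, abs_mul, abs_of_pos (Real.rpow_pos_of_pos hlam0 _),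
          abs_of_pos (Real.rpow_pos_of_pos hlam0 _)]
        ring
    _ ≤ _ := by
        have hpk0 := (abs_nonneg _).trans hpk
        gcongr
        exact Real.rpow_mul_rpow_neg_div_le hlam hR (Int.ceil_le.mp hak)

theorem abs_sum_error_terms_le {lam R t d : ℝ} (hlam : 1 ≤ lam) (hR : 0 < R) (hd : 0 ≤ d)
    {p : ℝ[X]} {M : ℝ}
    (hp : ∀ x y : ℝ, |x| ≤ y → |p.eval x| ≤ M * (1 + y) ^ p.natDegree)
    {e : ℕ → ℝ} (he : ∀ k, |e k| ≤ 2) :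
    |∑ k ∈ Icc ⌈R * (t - d)⌉ ⌊R * t⌋,
        lam ^ t * (lam ^ (-(k : ℝ) / R) * p.eval ((⌊R * t⌋ : ℝ) - k) * e k.toNat)|
      ≤ (R * d + 1) * (lam ^ d * (M * (1 + R * d) ^ p.natDegree) * 2) := by
  have hM : 0 ≤ M := by simpa using (abs_nonneg _).trans (hp 0 0 (by simp))
  refine (abs_sum_le_sum_abs _ _).trans <|
    (sum_le_card_nsmul _ _ _ fun k hk => abs_error_term_le hlam hR hp hk (he _)).trans ?_
  rw [nsmul_eq_mul]
  gcongr
  have hcard := Int.card_Icc_ceil_floor_le (by nlinarith : R * (t - d) ≤ R * t)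
  linarith

theorem error_propagation_bound (lam R gamma : ℝ) (hlam : 1 < lam) (hR : 0 < R)
    (hgamma : 0 < gamma) (p : Polynomial ℝ) :
    ∀ ε' > (0 : ℝ), ∃ K' > (0 : ℝ), ∀ t d : ℕ, d ≤ t →
      ∀ e : ℕ → ℝ, (∀ k, |e k| ≤ 2) →
        gamma * lam ^ t *
          |∑ k ∈ Finset.Icc ⌈R * ((t : ℝ) - (d : ℝ))⌉ ⌊R * (t : ℝ)⌋,
            lam ^ (-(k : ℝ) / R) *
              Polynomial.eval ((⌊R * (t : ℝ)⌋ : ℝ) - (k : ℝ)) p * e k.toNat|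
          ≤ K' * lam ^ ((1 + ε') * (d : ℝ)) := by
  intro ε' hε'
  obtain ⟨M, hM, hp⟩ := p.exists_abs_eval_le
  obtain ⟨K, hK, hgrowth⟩ := ((1 + C R * X) ^ (p.natDegree + 1) : ℝ[X])
    |>.exists_abs_eval_natCast_le_mul_pow (Real.one_lt_rpow hlam hε')
  refine ⟨2 * gamma * M * K, by positivity, fun t d _ e he => ?_⟩
  have hlam0 : 0 < lam := by linarith
  have hsum := abs_sum_error_terms_le (t := t) hlam.le hR d.cast_nonneg hp he
  rw [← mul_sum, abs_mul, Real.rpow_natCast, abs_of_pos (pow_pos hlam0 t)] at hsum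
  calc gamma * lam ^ t * _
      ≤ gamma * ((R * d + 1) * (lam ^ (d : ℝ) * (M * (1 + R * d) ^ p.natDegree) * 2)) := by
        rw [mul_assoc]; gcongr
    _ = 2 * gamma * M * lam ^ (d : ℝ) * ((1 + C R * X) ^ (p.natDegree + 1)).eval (d : ℝ) := by
        simp only [eval_pow, eval_add, eval_one, eval_mul, eval_C, eval_X]
        ring
    _ ≤ 2 * gamma * M * lam ^ (d : ℝ) * (K * (lam ^ ε') ^ d) := by
        gcongr
        exact (le_abs_self _).trans (hgrowth d)
    _ = 2 * gamma * M * K * lam ^ ((1 + ε') * (d : ℝ)) := by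
        rw [one_add_mul, Real.rpow_add hlam0, ← Real.rpow_natCast (lam ^ ε'),
          ← Real.rpow_mul hlam0.le]
        ring
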